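/- arXiv:1906.00285 — 2 statements merged into one kernel-verified Lean document; each statement's English description precedes it below -/
import Mathlib

section
/- (Identification under conditional independence, TPR) Let P be a probability measure on A×Ŷ×Y×Z with A, Z finite sets and Ŷ, Y ∈ {0,1}. Suppose (Ŷ,Y) is conditionally independent of A given Z. Then for any α with P(A=α, Y=1) > 0, P(Ŷ=1 | A=α, Y=1) = E[1{Ŷ=1, Y=1}·P(A=α|Z)] / E[1{Y=1}·P(A=α|Z)], so the within-class true positive rate is determined by the marginal distributions of (Ŷ,Y,Z) and (A,Z). -/
open Finset

variable {A Z : Type} [Fintype A] [Fintype Z]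

/-- Marginal probability of `Z = z` under a joint pmf on `A × Ŷ × Y × Z`. -/
def tprPZ (P : A × Bool × Bool × Z → ℝ) (z : Z) : ℝ :=
  ∑ α : A, ∑ yh : Bool, ∑ y : Bool, P (α, yh, y, z)

/-- Joint probability of `A = α, Z = z`. -/
def tprPAZ (P : A × Bool × Bool × Z → ℝ) (α : A) (z : Z) : ℝ :=
  ∑ yh : Bool, ∑ y : Bool, P (α, yh, y, z)

/-- Joint probability of `Ŷ = yh, Y = y, Z = z`. -/
def tprPWZ (P : A × Bool × Bool × Z → ℝ) (yh y : Bool) (z : Z) : ℝ :=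
  ∑ α : A, P (α, yh, y, z)

/-- Identification of the within-class true positive rate under conditional
independence of `(Ŷ, Y)` and `A` given `Z`:
`P(Ŷ=1 | A=α, Y=1) = E[1{Ŷ=1,Y=1}·P(A=α|Z)] / E[1{Y=1}·P(A=α|Z)]`. -/
theorem tpr_identified_under_conditional_independence
    (P : A × Bool × Bool × Z → ℝ)
    (hP0 : ∀ p, 0 ≤ P p) (hP1 : ∑ p : A × Bool × Bool × Z, P p = 1)
    (hCI : ∀ z : Z, 0 < tprPZ P z → ∀ (α : A) (yh y : Bool),
      P (α, yh, y, z) * tprPZ P z = tprPWZ P yh y z * tprPAZ P α z)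
    (α : A) (hα : 0 < ∑ z, ∑ yh : Bool, P (α, yh, true, z)) :
    (∑ z, P (α, true, true, z)) / (∑ z, ∑ yh : Bool, P (α, yh, true, z)) =
      (∑ z, tprPWZ P true true z * (tprPAZ P α z / tprPZ P z)) /
      (∑ z, (∑ yh : Bool, tprPWZ P yh true z) * (tprPAZ P α z / tprPZ P z)) := by
  have key : ∀ (z : Z) (yh y : Bool),
      P (α, yh, y, z) = tprPWZ P yh y z * (tprPAZ P α z / tprPZ P z) := by
    intro z yh y
    have hZ0 : 0 ≤ tprPZ P z := by
      exact Finset.sum_nonneg fun _ _ => Finset.sum_nonneg fun _ _ => Finset.sum_nonneg fun _ _ => hP0 _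
    rcases hZ0.lt_or_eq with h | h
    · have := hCI z h α yh y
      field_simp
      linarith [this]
    · have hz : tprPZ P z = 0 := h.symm
      have hPzero : P (α, yh, y, z) = 0 := by
        have hsum : ∑ α : A, ∑ yh : Bool, ∑ y : Bool, P (α, yh, y, z) = 0 := hz
        have h1 := (Finset.sum_eq_zero_iff_of_nonneg (fun a _ => Finset.sum_nonneg fun _ _ => Finset.sum_nonneg fun _ _ => hP0 _)).mp hsum α (Finset.mem_univ α)
        have h2 := (Finset.sum_eq_zero_iff_of_nonneg (fun a _ => Finset.sum_nonneg fun _ _ => hP0 _)).mp h1 yh (Finset.mem_univ yh)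
        have h3 := (Finset.sum_eq_zero_iff_of_nonneg (fun a _ => hP0 _)).mp h2 y (Finset.mem_univ y)
        exact h3
      rw [hPzero, hz, div_zero, mul_zero]
  have hnum : (∑ z, P (α, true, true, z)) =
      ∑ z, tprPWZ P true true z * (tprPAZ P α z / tprPZ P z) := by
    exact Finset.sum_congr rfl fun z _ => key z true true
  have hden : (∑ z, ∑ yh : Bool, P (α, yh, true, z)) =
      ∑ z, (∑ yh : Bool, tprPWZ P yh true z) * (tprPAZ P α z / tprPZ P z) := by
    refine Finset.sum_congr rfl fun z _ => ?_
    rw [Finset.sum_mul]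
    exact Finset.sum_congr rfl fun yh _ => key z yh true
  rw [hnum, hden]
end

section
/- (Unidentifiability of demographic disparity) Let Z be a finite set with a probability mass function p_Z, and let p_A(·|z) be a conditional distribution on A = {a,b} and p_Ŷ(·|z) a conditional distribution on {0,1}, for each z with p_Z(z)>0. Suppose there exists z₀ with p_Z(z₀) > 0 such that 0 < p_A(a|z₀) < 1 and 0 < p_Ŷ(1|z₀) < 1. Then there exist two joint distributions P₁, P₂ on A×{0,1}×Z, both having Z-marginal p_Z, conditional A-marginal p_A, and conditional Ŷ-marginal p_Ŷ, such that P₁(Ŷ=1|A=a) − P₁(Ŷ=1|A=b) ≠ P₂(Ŷ=1|A=a) − P₂(Ŷ=1|A=b). -/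
open Finset

/-- Unidentifiability of demographic disparity: given conditional marginals
`p_A(a|z)` and `p_Ŷ(1|z)` that are nondegenerate at some `z₀` of positive
probability, there exist two joint distributions on `A × Ŷ × Z`
(`A = Bool` with `a = true`, `b = false`; `Ŷ = Bool`) agreeing with all the
given marginals but with different demographic disparities. -/
theorem dd_unidentifiable {Z : Type} [Fintype Z]
    (pZ : Z → ℝ) (hpZ0 : ∀ z, 0 ≤ pZ z) (hpZ1 : ∑ z, pZ z = 1)
    (pA pY : Z → ℝ)
    (hpA : ∀ z, 0 < pZ z → 0 ≤ pA z ∧ pA z ≤ 1)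
    (hpY : ∀ z, 0 < pZ z → 0 ≤ pY z ∧ pY z ≤ 1)
    (z₀ : Z) (hz₀ : 0 < pZ z₀)
    (hA₀ : 0 < pA z₀ ∧ pA z₀ < 1) (hY₀ : 0 < pY z₀ ∧ pY z₀ < 1) :
    ∃ P₁ P₂ : Bool × Bool × Z → ℝ,
      ((∀ p, 0 ≤ P₁ p) ∧ (∑ p : Bool × Bool × Z, P₁ p = 1) ∧
        (∀ z, ∑ α : Bool, ∑ yh : Bool, P₁ (α, yh, z) = pZ z) ∧
        (∀ z, 0 < pZ z → (∑ yh : Bool, P₁ (true, yh, z)) / pZ z = pA z) ∧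
        (∀ z, 0 < pZ z → (∑ α : Bool, P₁ (α, true, z)) / pZ z = pY z)) ∧
      ((∀ p, 0 ≤ P₂ p) ∧ (∑ p : Bool × Bool × Z, P₂ p = 1) ∧
        (∀ z, ∑ α : Bool, ∑ yh : Bool, P₂ (α, yh, z) = pZ z) ∧
        (∀ z, 0 < pZ z → (∑ yh : Bool, P₂ (true, yh, z)) / pZ z = pA z) ∧
        (∀ z, 0 < pZ z → (∑ α : Bool, P₂ (α, true, z)) / pZ z = pY z)) ∧
      (∑ z, P₁ (true, true, z)) / (∑ z, ∑ yh : Bool, P₁ (true, yh, z)) -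
          (∑ z, P₁ (false, true, z)) / (∑ z, ∑ yh : Bool, P₁ (false, yh, z)) ≠
        (∑ z, P₂ (true, true, z)) / (∑ z, ∑ yh : Bool, P₂ (true, yh, z)) -
          (∑ z, P₂ (false, true, z)) / (∑ z, ∑ yh : Bool, P₂ (false, yh, z)) := by
  classical
  obtain ⟨hpA0, hpA1⟩ := hA₀
  obtain ⟨hpY0, hpY1⟩ := hY₀
  set ε : ℝ := min (pZ z₀ * (pA z₀ * (1 - pY z₀))) (pZ z₀ * ((1 - pA z₀) * pY z₀)) with hεdef
  have hε_pos : 0 < ε :=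
    lt_min (mul_pos hz₀ (mul_pos hpA0 (by linarith))) (mul_pos hz₀ (mul_pos (by linarith) hpY0))
  have hε1 : ε ≤ pZ z₀ * (pA z₀ * (1 - pY z₀)) := min_le_left _ _
  have hε2 : ε ≤ pZ z₀ * ((1 - pA z₀) * pY z₀) := min_le_right _ _
  set f : Bool → Z → ℝ := fun α z => if α then pA z else 1 - pA z with hf
  set g : Bool → Z → ℝ := fun y z => if y then pY z else 1 - pY z with hg
  set P₁ : Bool × Bool × Z → ℝ := fun p => pZ p.2.2 * (f p.1 p.2.2 * g p.2.1 p.2.2) with hP₁def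
  set c : Bool × Bool × Z → ℝ :=
    fun p => if p.2.2 = z₀ then (if p.1 = p.2.1 then ε else -ε) else 0 with hcdef
  set P₂ : Bool × Bool × Z → ℝ := fun p => P₁ p + c p with hP₂def
  have swap : ∀ Q : Bool × Bool × Z → ℝ,
      ∑ p : Bool × Bool × Z, Q p = ∑ z, ∑ α : Bool, ∑ y : Bool, Q (α, y, z) := by
    intro Q
    simp [Fintype.sum_prod_type, Finset.sum_add_distrib]
  have hfv : ∀ z, f true z = pA z := fun z => by simp [hf]
  have hfv' : ∀ z, f false z = 1 - pA z := fun z => by simp [hf]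
  have hgv : ∀ z, g true z = pY z := fun z => by simp [hg]
  have hgv' : ∀ z, g false z = 1 - pY z := fun z => by simp [hg]
  -- nonnegativity of P₁
  have hP₁0 : ∀ p, 0 ≤ P₁ p := by
    rintro ⟨α, y, z⟩
    rcases eq_or_lt_of_le (hpZ0 z) with h | h
    · simp [P₁, ← h]
    · obtain ⟨h1, h2⟩ := hpA z h
      obtain ⟨h3, h4⟩ := hpY z h
      cases α <;> cases y <;>
        · simp only [hP₁def, hfv, hfv', hgv, hgv']
          exact mul_nonneg h.le (mul_nonneg (by linarith) (by linarith))
  have hmar₁ : ∀ z, ∑ α : Bool, ∑ y : Bool, P₁ (α, y, z) = pZ z := by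
    intro z; simp [P₁, f, g]; ring
  have htot₁ : ∑ p : Bool × Bool × Z, P₁ p = 1 := by
    rw [swap]; simp_rw [hmar₁]; exact hpZ1
  have hAy : ∀ z, ∑ y : Bool, P₁ (true, y, z) = pZ z * pA z := by
    intro z; simp [P₁, f, g]; ring
  have hAy' : ∀ z, ∑ y : Bool, P₁ (false, y, z) = pZ z * (1 - pA z) := by
    intro z; simp [P₁, f, g]; ring
  have hYa : ∀ z, ∑ α : Bool, P₁ (α, true, z) = pZ z * pY z := by
    intro z; simp [P₁, f, g]; ring
  have hA₁ : ∀ z, 0 < pZ z → (∑ y : Bool, P₁ (true, y, z)) / pZ z = pA z := by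
    intro z hz; rw [hAy]; field_simp
  have hY₁ : ∀ z, 0 < pZ z → (∑ α : Bool, P₁ (α, true, z)) / pZ z = pY z := by
    intro z hz; rw [hYa]; field_simp
  -- properties of the correction c
  have hcy : ∀ (α : Bool) z, ∑ y : Bool, c (α, y, z) = 0 := by
    intro α z; by_cases hz : z = z₀ <;> cases α <;> simp [c, hz]
  have hca : ∀ (y : Bool) z, ∑ α : Bool, c (α, y, z) = 0 := by
    intro y z; by_cases hz : z = z₀ <;> cases y <;> simp [c, hz]
  have g00 : P₂ (false, false, z₀) = pZ z₀ * ((1 - pA z₀) * (1 - pY z₀)) + ε := by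
    simp [hP₂def, hP₁def, hcdef, hfv', hgv']
  have g01 : P₂ (false, true, z₀) = pZ z₀ * ((1 - pA z₀) * pY z₀) - ε := by
    simp [hP₂def, hP₁def, hcdef, hfv', hgv]; ring
  have g10 : P₂ (true, false, z₀) = pZ z₀ * (pA z₀ * (1 - pY z₀)) - ε := by
    simp [hP₂def, hP₁def, hcdef, hfv, hgv']; ring
  have g11 : P₂ (true, true, z₀) = pZ z₀ * (pA z₀ * pY z₀) + ε := by
    simp [hP₂def, hP₁def, hcdef, hfv, hgv]
  have hP₂0 : ∀ p, 0 ≤ P₂ p := by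
    rintro ⟨α, y, z⟩
    by_cases hz : z = z₀
    · rw [hz]
      have h00 : 0 < pZ z₀ * ((1 - pA z₀) * (1 - pY z₀)) :=
        mul_pos hz₀ (mul_pos (by linarith) (by linarith))
      have h11 : 0 < pZ z₀ * (pA z₀ * pY z₀) := mul_pos hz₀ (mul_pos hpA0 hpY0)
      cases α <;> cases y
      · rw [g00]; linarith
      · rw [g01]; linarith
      · rw [g10]; linarith
      · rw [g11]; linarith
    · have : c (α, y, z) = 0 := by simp [c, hz]
      simpa [P₂, this] using hP₁0 (α, y, z)
  have hmar₂ : ∀ z, ∑ α : Bool, ∑ y : Bool, P₂ (α, y, z) = pZ z := by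
    intro z
    have : ∀ α : Bool, ∑ y : Bool, P₂ (α, y, z) = ∑ y : Bool, P₁ (α, y, z) := by
      intro α
      simp only [hP₂def, Finset.sum_add_distrib]
      rw [hcy]; ring
    simp_rw [this]; exact hmar₁ z
  have htot₂ : ∑ p : Bool × Bool × Z, P₂ p = 1 := by
    rw [swap]; simp_rw [hmar₂]; exact hpZ1
  have hA₂ : ∀ z, 0 < pZ z → (∑ y : Bool, P₂ (true, y, z)) / pZ z = pA z := by
    intro z hz
    have : ∑ y : Bool, P₂ (true, y, z) = ∑ y : Bool, P₁ (true, y, z) := by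
      simp only [hP₂def, Finset.sum_add_distrib]; rw [hcy]; ring
    rw [this]; exact hA₁ z hz
  have hY₂ : ∀ z, 0 < pZ z → (∑ α : Bool, P₂ (α, true, z)) / pZ z = pY z := by
    intro z hz
    have : ∑ α : Bool, P₂ (α, true, z) = ∑ α : Bool, P₁ (α, true, z) := by
      simp only [hP₂def, Finset.sum_add_distrib]; rw [hca]; ring
    rw [this]; exact hY₁ z hz
  refine ⟨P₁, P₂, ⟨hP₁0, htot₁, hmar₁, hA₁, hY₁⟩, ⟨hP₂0, htot₂, hmar₂, hA₂, hY₂⟩, ?_⟩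
  -- disparity computation
  set Na : ℝ := ∑ z, pZ z * pA z with hNa
  set Nb : ℝ := ∑ z, pZ z * (1 - pA z) with hNb
  set Sa : ℝ := ∑ z, pZ z * (pA z * pY z) with hSa
  set Sb : ℝ := ∑ z, pZ z * ((1 - pA z) * pY z) with hSb
  have hNa_pos : 0 < Na := by
    have hle : pZ z₀ * pA z₀ ≤ Na := by
      apply Finset.single_le_sum (fun z _ => ?_) (mem_univ z₀)
      rcases eq_or_lt_of_le (hpZ0 z) with h | h
      · rw [← h]; simp
      · exact mul_nonneg h.le (hpA z h).1
    nlinarith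
  have hNb_pos : 0 < Nb := by
    have hle : pZ z₀ * (1 - pA z₀) ≤ Nb := by
      apply Finset.single_le_sum (fun z _ => ?_) (mem_univ z₀)
      rcases eq_or_lt_of_le (hpZ0 z) with h | h
      · rw [← h]; simp
      · exact mul_nonneg h.le (by linarith [(hpA z h).2])
    nlinarith
  have e1 : ∑ z, P₁ (true, true, z) = Sa := by
    simp [P₁, f, g, Sa]
  have e2 : ∑ z, ∑ y : Bool, P₁ (true, y, z) = Na := by
    rw [hNa]; exact Finset.sum_congr rfl fun z _ => hAy z
  have e3 : ∑ z, P₁ (false, true, z) = Sb := by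
    simp [P₁, f, g, Sb]
  have e4 : ∑ z, ∑ y : Bool, P₁ (false, y, z) = Nb := by
    rw [hNb]; exact Finset.sum_congr rfl fun z _ => hAy' z
  have hcsum : ∀ (α y : Bool), ∑ z, c (α, y, z) = (if α = y then ε else -ε) := by
    intro α y
    simp only [hcdef]
    rw [Finset.sum_ite_eq' univ z₀ (fun _ => if α = y then ε else -ε)]
    simp
  have f1 : ∑ z, P₂ (true, true, z) = Sa + ε := by
    simp only [hP₂def, Finset.sum_add_distrib, e1, hcsum]; simp
  have f2 : ∑ z, ∑ y : Bool, P₂ (true, y, z) = Na := by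
    have : ∀ z, ∑ y : Bool, P₂ (true, y, z) = ∑ y : Bool, P₁ (true, y, z) := by
      intro z; simp only [hP₂def, Finset.sum_add_distrib]; rw [hcy]; ring
    simp_rw [this]; exact e2
  have f3 : ∑ z, P₂ (false, true, z) = Sb - ε := by
    simp only [hP₂def, Finset.sum_add_distrib, e3, hcsum]; simp; ring
  have f4 : ∑ z, ∑ y : Bool, P₂ (false, y, z) = Nb := by
    have : ∀ z, ∑ y : Bool, P₂ (false, y, z) = ∑ y : Bool, P₁ (false, y, z) := by
      intro z; simp only [hP₂def, Finset.sum_add_distrib]; rw [hcy]; ring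
    simp_rw [this]; exact e4
  rw [e1, e2, e3, e4, f1, f2, f3, f4]
  intro h
  have ha : (Sa + ε) / Na = Sa / Na + ε / Na := add_div _ _ _
  have hb : (Sb - ε) / Nb = Sb / Nb - ε / Nb := sub_div _ _ _
  have h1 : 0 < ε / Na := div_pos hε_pos hNa_pos
  have h2 : 0 < ε / Nb := div_pos hε_pos hNb_pos
  rw [ha, hb] at h
  linarith
end
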